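/- arXiv:2312.10499 — 2 statements merged into one kernel-verified Lean document; each statement's English description precedes it below -/
import Mathlib

section
/- Let F and G be continuous cdfs with 1 - H = (1-F)(1-G), and let H^0(z) = P(Z ≤ z, δ = 0) where Z = min(X,Y), δ = 1{X ≤ Y}, X ~ F, Y ~ G independent. Then γ_0(x) = exp(∫_{z < x} dH^0(z)/(1 - H(z))) equals 1/(1 - G(x)) for all x with H(x) < 1. -/
/-!
On `z < x` we have `F z ≤ F x < 1`, so the integrand reduces to `(1 - G z)⁻¹`. For a continuous
cdf `G` the image of `dG` under `G` is Lebesgue measure on `(0, 1)` (probability integral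
transform), and `{z < x}` agrees `dG`-a.e. with `{z | G z ≤ G x}`. Hence the integral equals
`∫₀^{G x} dt / (1 - t) = -log (1 - G x)`.
-/

open MeasureTheory Filter Set Topology

lemma Set.Iic_inter_Ioo_of_lt {α : Type*} [LinearOrder α] {a b c : α} (h : a < c) :
    Iic a ∩ Ioo b c = Ioc b a := by
  ext; simp only [mem_inter_iff, mem_Iic, mem_Ioo, mem_Ioc]; grind

namespace StieltjesFunction

variable {f : StieltjesFunction ℝ}

lemma nonneg_of_tendsto_atBot (hf0 : Tendsto f atBot (𝓝 0)) (z : ℝ) : 0 ≤ f z :=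
  f.mono.le_of_tendsto hf0 z

lemma le_one_of_tendsto_atTop (hf1 : Tendsto f atTop (𝓝 1)) (z : ℝ) : f z ≤ 1 :=
  f.mono.ge_of_tendsto hf1 z

lemma Ioo_subset_range (hf : Continuous f) (hf0 : Tendsto f atBot (𝓝 0))
    (hf1 : Tendsto f atTop (𝓝 1)) : Ioo 0 1 ⊆ range f := fun _ ht =>
  mem_range_of_exists_le_of_exists_ge hf
    ((hf0.eventually (eventually_le_nhds ht.1)).exists)
    ((hf1.eventually (eventually_ge_nhds ht.2)).exists)

lemma measure_preimage_Iic_le (hf0 : Tendsto f atBot (𝓝 0)) {t b : ℝ} (h : t < f b) :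
    f.measure (f ⁻¹' Iic t) ≤ ENNReal.ofReal (f b) := by
  rw [← sub_zero (f b), ← f.measure_Iic hf0]
  exact measure_mono fun z hz => f.mono.reflect_lt (lt_of_le_of_lt hz h) |>.le

lemma le_measure_preimage_Iic (hf0 : Tendsto f atBot (𝓝 0)) {t a : ℝ} (h : f a ≤ t) :
    ENNReal.ofReal (f a) ≤ f.measure (f ⁻¹' Iic t) := by
  rw [← sub_zero (f a), ← f.measure_Iic hf0]
  exact measure_mono fun z hz => (f.mono hz).trans h

lemma measure_preimage_Iic (hf : Continuous f) (hf0 : Tendsto f atBot (𝓝 0))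
    (hf1 : Tendsto f atTop (𝓝 1)) {t : ℝ} (ht0 : 0 ≤ t) (ht1 : t < 1) :
    f.measure (f ⁻¹' Iic t) = ENNReal.ofReal t := by
  have hrange := Ioo_subset_range hf hf0 hf1
  have hofReal := ENNReal.continuous_ofReal.tendsto t
  -- `f a ≤ t < f b` squeezes the measure between `f a` and `f b`, and by the intermediate value
  -- theorem `f a` and `f b` can be taken arbitrarily close to `t`.
  apply le_antisymm
  · refine ge_of_tendsto (hofReal.mono_left (nhdsWithin_le_nhds (s := Ioi t))) ?_
    filter_upwards [Ioo_mem_nhdsGT ht1] with s hs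
    obtain ⟨b, rfl⟩ := hrange ⟨ht0.trans_lt hs.1, hs.2⟩
    exact measure_preimage_Iic_le hf0 hs.1
  · refine le_of_tendsto (hofReal.mono_left (nhdsWithin_le_nhds (s := Iio t))) ?_
    filter_upwards [self_mem_nhdsWithin] with s hs
    rcases le_or_gt s 0 with hs0 | hs0
    · simp [ENNReal.ofReal_of_nonpos hs0]
    obtain ⟨a, rfl⟩ := hrange ⟨hs0, hs.out.trans ht1⟩
    exact le_measure_preimage_Iic hf0 hs.out.le

theorem map_measure_self (hf : Continuous f) (hf0 : Tendsto f atBot (𝓝 0))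
    (hf1 : Tendsto f atTop (𝓝 1)) : f.measure.map f = volume.restrict (Ioo 0 1) := by
  have := f.isProbabilityMeasure hf0 hf1
  have hfm : Measurable f := f.mono.measurable
  refine Measure.ext_of_Iic _ _ fun t => ?_
  rw [Measure.map_apply hfm measurableSet_Iic, Measure.restrict_apply measurableSet_Iic]
  rcases lt_or_ge t 0 with ht0 | ht0
  · have hempty : Iic t ∩ Ioo (0 : ℝ) 1 = ∅ :=
      ((Iic_disjoint_Ioi ht0.le).mono_right Ioo_subset_Ioi_self).inter_eq
    rw [hempty, measure_empty, ← nonpos_iff_eq_zero]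
    calc f.measure (f ⁻¹' Iic t) ≤ f.measure (f ⁻¹' Iic 0) :=
          measure_mono (preimage_mono (Iic_subset_Iic.2 ht0.le))
      _ = 0 := by rw [measure_preimage_Iic hf hf0 hf1 le_rfl zero_lt_one, ENNReal.ofReal_zero]
  rcases lt_or_ge t 1 with ht1 | ht1
  · rw [measure_preimage_Iic hf hf0 hf1 ht0 ht1, Iic_inter_Ioo_of_lt ht1, Real.volume_Ioc,
      sub_zero]
  · have hall : f ⁻¹' Iic t = univ :=
      eq_univ_of_forall fun z => (le_one_of_tendsto_atTop hf1 z).trans ht1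
    rw [hall, MeasureTheory.measure_univ, inter_eq_right.2 fun s hs => hs.2.le.trans ht1,
      Real.volume_Ioo]
    norm_num

lemma Iio_ae_eq_preimage_Iic (hf : Continuous f) (hf0 : Tendsto f atBot (𝓝 0))
    (hf1 : Tendsto f atTop (𝓝 1)) {x : ℝ} (hx : f x < 1) :
    Iio x =ᵐ[f.measure] f ⁻¹' Iic (f x) := by
  have hatom : f.measure {x} = 0 := by
    rw [f.measure_singleton, f.mono.continuousWithinAt_Iio_iff_leftLim_eq.1
      hf.continuousAt.continuousWithinAt, sub_self, ENNReal.ofReal_zero]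
  have hmeasure : f.measure (f ⁻¹' Iic (f x)) = f.measure (Iic x) := by
    rw [measure_preimage_Iic hf hf0 hf1 (nonneg_of_tendsto_atBot hf0 x) hx, f.measure_Iic hf0,
      sub_zero]
  refine (Iio_ae_eq_Iic' hatom).trans <| ae_eq_of_subset_of_measure_ge (fun z hz => f.mono hz)
    hmeasure.le measurableSet_Iic.nullMeasurableSet ?_
  rw [hmeasure, f.measure_Iic hf0]
  exact ENNReal.ofReal_ne_top

theorem setIntegral_Iio_comp {E : Type*} [NormedAddCommGroup E] [NormedSpace ℝ E]
    (hf : Continuous f) (hf0 : Tendsto f atBot (𝓝 0)) (hf1 : Tendsto f atTop (𝓝 1))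
    {x : ℝ} (hx : f x < 1) {g : ℝ → E} (hg : AEStronglyMeasurable g volume) :
    ∫ z in Iio x, g (f z) ∂f.measure = ∫ t in Ioc 0 (f x), g t := by
  have hmap := map_measure_self hf hf0 hf1
  calc ∫ z in Iio x, g (f z) ∂f.measure
      = ∫ z in f ⁻¹' Iic (f x), g (f z) ∂f.measure :=
        setIntegral_congr_set (Iio_ae_eq_preimage_Iic hf hf0 hf1 hx)
    _ = ∫ t in Iic (f x), g t ∂(f.measure.map f) :=
        (setIntegral_map measurableSet_Iic (hmap ▸ hg.restrict)
          f.mono.measurable.aemeasurable).symm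
    _ = ∫ t in Ioc 0 (f x), g t := by
        rw [hmap, Measure.restrict_restrict measurableSet_Iic, Iic_inter_Ioo_of_lt hx]

end StieltjesFunction

lemma integral_inv_one_sub {c : ℝ} (hc : c < 1) :
    ∫ t in (0)..c, (1 - t)⁻¹ = -Real.log (1 - c) := by
  rw [intervalIntegral.integral_comp_sub_left (fun t => t⁻¹) 1, sub_zero,
    integral_inv (Set.notMem_uIcc_of_lt (by linarith) one_pos), one_div, Real.log_inv]

theorem stmt3_general (F G : StieltjesFunction ℝ) (H : ℝ → ℝ)
    (hGc : Continuous G)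
    (hG0 : Tendsto (G : ℝ → ℝ) atBot (nhds 0))
    (hG1 : Tendsto (G : ℝ → ℝ) atTop (nhds 1))
    (hH : ∀ z, 1 - H z = (1 - F z) * (1 - G z))
    (x : ℝ) (hx : H x < 1) :
    Real.exp (∫ z in Set.Iio x, (1 - F z) / (1 - H z) ∂G.measure) = 1 / (1 - G x) := by
  have hprod : 0 < (1 - F x) * (1 - G x) := by rw [← hH]; linarith
  have hGx : G x < 1 :=
    (StieltjesFunction.le_one_of_tendsto_atTop hG1 x).lt_of_ne fun h => by simp [h] at hprod
  have hFx : 0 < 1 - F x := pos_of_mul_pos_left hprod (sub_pos.2 hGx).le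
  have hintegrand : EqOn (fun z => (1 - F z) / (1 - H z)) (fun z => (1 - G z)⁻¹) (Iio x) := by
    intro z hz
    have hFz : 1 - F z ≠ 0 := by linarith [F.mono hz.out.le]
    simp only [hH, div_mul_eq_div_div, div_self hFz, one_div]
  rw [setIntegral_congr_fun measurableSet_Iio hintegrand,
    G.setIntegral_Iio_comp hGc hG0 hG1 hGx (g := fun t => (1 - t)⁻¹) (by fun_prop),
    ← intervalIntegral.integral_of_le (StieltjesFunction.nonneg_of_tendsto_atBot hG0 x),
    integral_inv_one_sub hGx, Real.exp_neg, Real.exp_log (sub_pos.2 hGx), one_div]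

/-- For continuous cdfs `F, G` with `1 - H = (1-F)(1-G)` and the subdistribution measure
`dH⁰ = (1-F) dG`, the function `γ₀(x) = exp(∫_{z<x} dH⁰(z)/(1-H(z)))` equals
`1/(1 - G(x))` for all `x` with `H(x) < 1`. -/
theorem stmt3 (F G : StieltjesFunction ℝ) (H : ℝ → ℝ)
    (hFc : Continuous F) (hGc : Continuous G)
    (hF0 : Tendsto (F : ℝ → ℝ) atBot (nhds 0)) (hG0 : Tendsto (G : ℝ → ℝ) atBot (nhds 0))
    (hF1 : Tendsto (F : ℝ → ℝ) atTop (nhds 1)) (hG1 : Tendsto (G : ℝ → ℝ) atTop (nhds 1))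
    (hH : ∀ z, 1 - H z = (1 - F z) * (1 - G z))
    (x : ℝ) (hx : H x < 1) :
    Real.exp (∫ z in Set.Iio x, (1 - F z) / (1 - H z) ∂G.measure) = 1 / (1 - G x) :=
  stmt3_general F G H hGc hG0 hG1 hH x hx
end

section
/- Let U_F be the tail quantile function of a cdf F, and suppose F(t) < 1 and F is continuous and strictly increasing near t. Then the tail quantile function of the tail counterpart F^t (defined by F^t(x) = (F(xt)-F(t))/(1-F(t)) for x ≥ 1) satisfies U_{F^t}(x) = U_F(x/(1-F(t))) / U_F(1/(1-F(t))) for x > 1. -/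
/-! The condition defining `U_{F^t}(x)` is an affine rewriting of the condition
`F(yt) ≥ 1 - (1 - F(t))/x` defining `U_F(x/(1 - F(t)))`, with `y` replaced by `yt`;
the infimum therefore only gets divided by `t = U_F(1/(1 - F(t)))`. -/

/-- The tail quantile function `U_F(t) = inf {x : F(x) ≥ 1 - 1/t}`. -/
noncomputable def tailQuantile (F : ℝ → ℝ) (t : ℝ) : ℝ := sInf {x : ℝ | 1 - 1 / t ≤ F x}

open Pointwise in
theorem Real.sInf_preimage_mul_const {t : ℝ} (ht : 0 < t) (s : Set ℝ) :
    sInf ((· * t) ⁻¹' s) = sInf s / t := by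
  have hpre : (· * t) ⁻¹' s = t⁻¹ • s := by
    simpa only [smul_eq_mul, mul_comm t] using Set.preimage_smul₀ ht.ne' s
  rw [hpre, Real.sInf_smul_of_nonneg (inv_nonneg.mpr ht.le), smul_eq_mul, inv_mul_eq_div]

theorem tailQuantile_comp_mul_const (F : ℝ → ℝ) {t : ℝ} (ht : 0 < t) (x : ℝ) :
    tailQuantile (fun y => F (y * t)) x = tailQuantile F x / t :=
  Real.sInf_preimage_mul_const ht {z | 1 - 1 / x ≤ F z}

theorem tailQuantile_sub_div_one_sub (G : ℝ → ℝ) {a : ℝ} (ha : a < 1) (x : ℝ) :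
    tailQuantile (fun y => (G y - a) / (1 - a)) x = tailQuantile G (x / (1 - a)) := by
  have hc : 0 < 1 - a := by linarith
  unfold tailQuantile
  congr 1
  ext y
  simp only [Set.mem_ofPred_eq, le_div_iff₀ hc, one_div_div]
  have hexpand : (1 - 1 / x) * (1 - a) = (1 - a) - (1 - a) / x := by ring
  constructor <;> intro h <;> linarith

theorem stmt10_general (F : ℝ → ℝ) (t : ℝ) (ht : 0 < t) (hFt : F t < 1)
    (htU : tailQuantile F (1 / (1 - F t)) = t)
    (x : ℝ) :
    tailQuantile (fun y => (F (y * t) - F t) / (1 - F t)) x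
      = tailQuantile F (x / (1 - F t)) / tailQuantile F (1 / (1 - F t)) := by
  rw [htU, tailQuantile_sub_div_one_sub (fun y => F (y * t)) hFt,
    tailQuantile_comp_mul_const F ht]

/-- The tail quantile function of the tail counterpart
`F^t(x) = (F(xt) - F(t))/(1 - F(t))` satisfies
`U_{F^t}(x) = U_F(x/(1-F(t))) / U_F(1/(1-F(t)))` for `x > 1`. -/
theorem stmt10 (F : ℝ → ℝ) (t : ℝ) (ht : 0 < t) (hFt : F t < 1)
    (hFc : Continuous F) (hmono : StrictMonoOn F (Set.Ici t))
    (htU : tailQuantile F (1 / (1 - F t)) = t)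
    (x : ℝ) (hx : 1 < x) :
    tailQuantile (fun y => (F (y * t) - F t) / (1 - F t)) x
      = tailQuantile F (x / (1 - F t)) / tailQuantile F (1 / (1 - F t)) :=
  stmt10_general F t ht hFt htU x
end
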